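/- arXiv:1404.2705 — 5 statements merged into one kernel-verified Lean document; each statement's English description precedes it below -/
import Mathlib

section
/- Let z ∈ ℂ with z ≠ 0 and z² not a negative real number, and let N ≥ 1 be an integer. Then TS_N(z) + R_N(z) = R_1(z). In other words, the divergence of the truncated Stirling series as N grows is exactly counterbalanced by the regularized remainder, and the sum is independent of the truncation parameter N. -/
open MeasureTheory

/-- Leading terms of Stirling's approximation: `F(z) = (z - 1/2)·Log z − z + (1/2)·log(2π)`. -/
noncomputable def F (z : ℂ) : ℂ :=
  (z - 1/2) * Complex.log z - z + (1/2) * (Real.log (2 * Real.pi) : ℂ)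

/-- Truncated Stirling series `TS_N(z)`. -/
noncomputable def TS (N : ℕ) (z : ℂ) : ℂ :=
  ∑ k ∈ Finset.Icc 1 (N - 1),
    2 * (-1)^(k+1) * (Nat.factorial (2*k - 2) : ℂ) * riemannZeta (2*(k:ℂ)) /
      ((2 * (Real.pi : ℂ))^(2*k) * z^(2*k - 1))

/-- Borel-summed regularized remainder `R_N(z)`. -/
noncomputable def R (N : ℕ) (z : ℂ) : ℂ :=
  2 * (-1)^(N+1) * z * (2 * (Real.pi : ℂ) * z)^((2:ℤ) - 2*(N:ℤ)) *
    ∑' n : ℕ, ((n:ℂ) + 1)^((2:ℤ) - 2*(N:ℤ)) *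
      ∫ y in Set.Ioi (0:ℝ),
        (y:ℂ)^(2*N - 2) * Real.exp (-y) /
          ((y:ℂ)^2 + 4 * (Real.pi : ℂ)^2 * ((n:ℂ) + 1)^2 * z^2)

/-!
With `a = 2πnz`, the identity `y^(2N) / (y² + a²) = y^(2N-2) - a² · y^(2N-2) / (y² + a²)` splits
the Borel integral in `R_(N+1)` into `(2N-2)!`, whose weighted sum over `n` is `(2N-2)! ζ(2N)`,
minus `a²` times the integral in `R_N`. After the prefactors are matched this reads
`R_N = (N-th Stirling term) + R_(N+1)`, and the theorem telescopes. Everything converges because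
`z²` avoids the cut `(-∞, 0]`: for `c > 0` and `t ≥ 0`, `‖t + c z²‖ ≥ c · dist(z², (-∞, 0])`.
-/

open Set Metric Complex
open scoped Nat ComplexOrder

noncomputable def borelIntegral (m : ℕ) (w : ℂ) : ℂ :=
  ∫ y in Ioi (0:ℝ), (y:ℂ)^m * Real.exp (-y) / ((y:ℂ)^2 + w)

lemma integrableOn_pow_mul_exp_neg (m : ℕ) :
    IntegrableOn (fun y : ℝ => y^m * Real.exp (-y)) (Ioi 0) := by
  refine (Real.GammaIntegral_convergent (s := m + 1) (by positivity)).congr_fun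
    (fun y _ => ?_) measurableSet_Ioi
  simp [mul_comm]

lemma integral_pow_mul_exp_neg (m : ℕ) :
    ∫ y in Ioi (0:ℝ), y^m * Real.exp (-y) = m ! := by
  rw [← Real.Gamma_nat_eq_factorial, Real.Gamma_eq_integral (by positivity)]
  refine setIntegral_congr_fun measurableSet_Ioi fun y _ => ?_
  simp [mul_comm]

lemma infDist_compl_slitPlane_pos {w : ℂ} (hw : w ∈ slitPlane) : 0 < infDist w slitPlaneᶜ :=
  (isOpen_slitPlane.isClosed_compl.notMem_iff_infDist_pos ⟨0, zero_notMem_slitPlane⟩).1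
    (not_not.2 hw)

lemma mul_infDist_le_norm_ofReal_add_mul (w : ℂ) {c t : ℝ} (hc : 0 < c) (ht : 0 ≤ t) :
    c * infDist w slitPlaneᶜ ≤ ‖(t:ℂ) + c * w‖ := by
  have hmem : -((t / c : ℝ) : ℂ) ∈ slitPlaneᶜ := fun h =>
    (neg_ofReal_mem_slitPlane.1 h).not_ge (by positivity)
  have hfactor : (t:ℂ) + c * w = c * (w - -((t / c : ℝ) : ℂ)) := by
    have : (c:ℂ) ≠ 0 := ofReal_ne_zero.2 hc.ne'
    push_cast; field_simp; ring
  rw [hfactor, norm_mul, norm_real, Real.norm_of_nonneg hc.le, ← dist_eq]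
  exact mul_le_mul_of_nonneg_left (infDist_le_dist_of_mem hmem) hc.le

lemma ofReal_mul_mem_slitPlane {w : ℂ} {c : ℝ} (hc : 0 < c) (hw : w ∈ slitPlane) :
    (c:ℂ) * w ∈ slitPlane := by
  rw [mem_slitPlane_iff, re_ofReal_mul, im_ofReal_mul] at *
  rcases hw with h | h
  · exact .inl (mul_pos hc h)
  · exact .inr (mul_ne_zero hc.ne' h)

lemma ofReal_sq_add_ne_zero {w : ℂ} (hw : w ∈ slitPlane) (y : ℝ) : (y:ℂ)^2 + w ≠ 0 := by
  intro h
  rw [eq_neg_of_add_eq_zero_right h, ← ofReal_pow, neg_ofReal_mem_slitPlane] at hw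
  exact hw.not_ge (sq_nonneg y)

lemma sq_mem_slitPlane {z : ℂ} (hz : z ≠ 0) (hz2 : ∀ r : ℝ, r < 0 → z^2 ≠ (r : ℂ)) :
    z^2 ∈ slitPlane := by
  rw [mem_slitPlane_iff_not_le_zero]
  intro hle
  rcases hle.lt_or_eq with hlt | heq
  · exact hz2 _ (neg_iff.1 hlt).1 (ext rfl (by simpa using (neg_iff.1 hlt).2))
  · exact hz (pow_eq_zero_iff two_ne_zero |>.1 heq)

lemma norm_borelIntegrand_le (m : ℕ) {w : ℂ} {c y : ℝ} (hc : 0 < c) (hw : w ∈ slitPlane)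
    (hy : 0 ≤ y) :
    ‖(y:ℂ)^m * Real.exp (-y) / ((y:ℂ)^2 + c * w)‖
      ≤ y^m * Real.exp (-y) / (c * infDist w slitPlaneᶜ) := by
  have hden := mul_infDist_le_norm_ofReal_add_mul w hc (sq_nonneg y)
  push_cast at hden
  rw [norm_div, norm_mul, norm_pow, norm_real, norm_real, Real.norm_of_nonneg hy,
    Real.norm_of_nonneg (Real.exp_pos _).le]
  gcongr
  exact mul_pos hc (infDist_compl_slitPlane_pos hw)

lemma integrableOn_borelIntegrand (m : ℕ) {w : ℂ} (hw : w ∈ slitPlane) :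
    IntegrableOn (fun y : ℝ => (y:ℂ)^m * Real.exp (-y) / ((y:ℂ)^2 + w)) (Ioi 0) := by
  refine Integrable.mono' ((integrableOn_pow_mul_exp_neg m).div_const (infDist w slitPlaneᶜ))
    (Measurable.aestronglyMeasurable (by fun_prop)) ?_
  filter_upwards [ae_restrict_mem measurableSet_Ioi] with y hy
  simpa using norm_borelIntegrand_le m one_pos hw (le_of_lt hy)

lemma norm_borelIntegral_ofReal_mul_le (m : ℕ) {w : ℂ} {c : ℝ} (hc : 0 < c)
    (hw : w ∈ slitPlane) :
    ‖borelIntegral m (c * w)‖ ≤ m ! / (c * infDist w slitPlaneᶜ) := by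
  rw [← integral_pow_mul_exp_neg, ← integral_div]
  refine norm_integral_le_of_norm_le ((integrableOn_pow_mul_exp_neg m).div_const _) ?_
  filter_upwards [ae_restrict_mem measurableSet_Ioi] with y hy
  exact norm_borelIntegrand_le m hc hw (le_of_lt hy)

lemma borelIntegral_add_two (m : ℕ) {w : ℂ} (hw : w ∈ slitPlane) :
    borelIntegral (m + 2) w = (m ! : ℂ) - w * borelIntegral m w := by
  have hsplit : ∀ y : ℝ, (y:ℂ)^(m+2) * Real.exp (-y) / ((y:ℂ)^2 + w)
      = ((y^m * Real.exp (-y) : ℝ) : ℂ) - w * ((y:ℂ)^m * Real.exp (-y) / ((y:ℂ)^2 + w)) := by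
    intro y
    have := ofReal_sq_add_ne_zero hw y
    push_cast; field_simp; ring
  simp_rw [borelIntegral, hsplit]
  rw [integral_sub, integral_const_mul, integral_complex_ofReal, integral_pow_mul_exp_neg,
    ofReal_natCast]
  · exact (integrableOn_pow_mul_exp_neg m).ofReal
  · exact (integrableOn_borelIntegrand m hw).const_mul w

lemma norm_inv_natCast_add_one_pow (n k : ℕ) :
    ‖(((n:ℂ) + 1)^k)⁻¹‖ = (((n + 1 : ℕ) : ℝ)^k)⁻¹ := by
  rw [norm_inv, norm_pow, ← Nat.cast_add_one, norm_natCast]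

lemma hasSum_inv_nat_add_one_pow {k : ℕ} (hk : 1 < k) :
    HasSum (fun n : ℕ => (((n:ℂ) + 1)^k)⁻¹) (riemannZeta k) := by
  have hs : Summable (fun n : ℕ => (((n:ℂ) + 1)^k)⁻¹) := by
    refine .of_norm ?_
    have := (summable_nat_add_iff 1).2 (Real.summable_nat_pow_inv.2 hk)
    exact this.congr fun n => (norm_inv_natCast_add_one_pow n k).symm
  convert hs.hasSum
  rw [zeta_eq_tsum_one_div_nat_add_one_cpow (by simpa using hk)]
  simp only [cpow_natCast, one_div]

lemma four_mul_pi_sq_mul_eq_ofReal_mul (n : ℕ) (z : ℂ) :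
    4 * (Real.pi : ℂ)^2 * ((n:ℂ) + 1)^2 * z^2
      = ((4 * Real.pi^2 * ((n:ℝ) + 1)^2 : ℝ) : ℂ) * z^2 := by
  push_cast; ring

noncomputable def remainderSum (m : ℕ) (z : ℂ) : ℂ :=
  ∑' n : ℕ, (((n:ℂ) + 1)^(2*m))⁻¹ *
    borelIntegral (2*m) (4 * (Real.pi : ℂ)^2 * ((n:ℂ) + 1)^2 * z^2)

lemma summable_remainderSum {z : ℂ} (hz : z^2 ∈ slitPlane) (m : ℕ) :
    Summable (fun n : ℕ => (((n:ℂ) + 1)^(2*m))⁻¹ *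
      borelIntegral (2*m) (4 * (Real.pi : ℂ)^2 * ((n:ℂ) + 1)^2 * z^2)) := by
  set C := (2*m)! / (4 * Real.pi^2 * infDist (z^2) slitPlaneᶜ)
  refine .of_norm_bounded ((summable_nat_add_iff 1).2 (Real.summable_nat_pow_inv.2 one_lt_two)
    |>.mul_left C) fun n => ?_
  have hpow : ‖(((n:ℂ) + 1)^(2*m))⁻¹‖ ≤ 1 := by
    rw [norm_inv_natCast_add_one_pow]
    exact inv_le_one_of_one_le₀ (one_le_pow₀ (by simp))
  calc _ ≤ 1 * ((2*m)! / ((4 * Real.pi^2 * ((n:ℝ) + 1)^2) * infDist (z^2) slitPlaneᶜ)) := by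
        rw [norm_mul, four_mul_pi_sq_mul_eq_ofReal_mul]
        exact mul_le_mul hpow (norm_borelIntegral_ofReal_mul_le _ (by positivity) hz)
          (norm_nonneg _) zero_le_one
    _ = C * (((n + 1 : ℕ) : ℝ)^2)⁻¹ := by simp only [C]; push_cast; field_simp

lemma remainderSum_succ {z : ℂ} (hz : z^2 ∈ slitPlane) (m : ℕ) :
    remainderSum (m + 1) z
      = (2*m)! * riemannZeta (2 * ((m + 1 : ℕ) : ℂ)) - 4 * Real.pi^2 * z^2 * remainderSum m z := by
  have hterm : ∀ n : ℕ, (((n:ℂ) + 1)^(2*(m+1)))⁻¹ *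
        borelIntegral (2*(m+1)) (4 * (Real.pi : ℂ)^2 * ((n:ℂ) + 1)^2 * z^2)
      = (2*m)! * (((n:ℂ) + 1)^(2*(m+1)))⁻¹ - 4 * Real.pi^2 * z^2 * ((((n:ℂ) + 1)^(2*m))⁻¹ *
          borelIntegral (2*m) (4 * (Real.pi : ℂ)^2 * ((n:ℂ) + 1)^2 * z^2)) := by
    intro n
    have hn : (n:ℂ) + 1 ≠ 0 := Nat.cast_add_one_ne_zero n
    rw [Nat.mul_succ, borelIntegral_add_two _ <| four_mul_pi_sq_mul_eq_ofReal_mul n z ▸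
      ofReal_mul_mem_slitPlane (by positivity) hz]
    field_simp
    ring
  have hzeta := hasSum_inv_nat_add_one_pow (k := 2*(m+1)) (by omega)
  rw [remainderSum, tsum_congr hterm,
    ((hzeta.mul_left _).sub ((summable_remainderSum hz m).hasSum.mul_left _)).tsum_eq]
  push_cast
  rfl

lemma R_add_one_eq_remainderSum (m : ℕ) (z : ℂ) :
    R (m + 1) z = 2 * (-1)^m * z * ((2 * Real.pi * z)^(2*m))⁻¹ * remainderSum m z := by
  have hexp : (2:ℤ) - 2 * ((m + 1 : ℕ) : ℤ) = -((2*m : ℕ) : ℤ) := by push_cast; ring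
  have hsign : (-1 : ℂ)^(m + 1 + 1) = (-1)^m := by ring
  simp only [R, remainderSum, borelIntegral, hexp, hsign, zpow_neg, zpow_natCast,
    show 2 * (m + 1) - 2 = 2 * m by omega]

noncomputable def stirlingTerm (k : ℕ) (z : ℂ) : ℂ :=
  2 * (-1)^(k+1) * (Nat.factorial (2*k - 2) : ℂ) * riemannZeta (2*(k:ℂ)) /
    ((2 * (Real.pi : ℂ))^(2*k) * z^(2*k - 1))

lemma TS_add_two (m : ℕ) (z : ℂ) : TS (m + 2) z = TS (m + 1) z + stirlingTerm (m + 1) z :=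
  Finset.sum_Icc_succ_top (by omega) _

lemma R_eq_stirlingTerm_add_R {z : ℂ} (hz : z ≠ 0) (hz2 : z^2 ∈ slitPlane) (m : ℕ) :
    R (m + 1) z = stirlingTerm (m + 1) z + R (m + 2) z := by
  rw [R_add_one_eq_remainderSum, R_add_one_eq_remainderSum, remainderSum_succ hz2, stirlingTerm,
    show 2 * (m + 1) - 2 = 2 * m by omega, show 2 * (m + 1) - 1 = 2 * m + 1 by omega]
  have : (Real.pi : ℂ) ≠ 0 := ofReal_ne_zero.2 Real.pi_ne_zero
  field_simp
  ring

/-- The divergence of the truncated Stirling series as `N` grows is exactly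
counterbalanced by the regularized remainder: for `z ≠ 0` with `z²` not a
negative real number, `TS_N(z) + R_N(z) = R_1(z)` for every `N ≥ 1`. -/
theorem truncatedSum_add_remainder_eq_remainder_one (z : ℂ) (hz : z ≠ 0)
    (hz2 : ∀ r : ℝ, r < 0 → z^2 ≠ (r : ℂ)) (N : ℕ) (hN : 1 ≤ N) :
    TS N z + R N z = R 1 z := by
  induction N, hN using Nat.le_induction with
  | base => simp [TS]
  | succ N hN ih =>
    obtain ⟨m, rfl⟩ := Nat.exists_eq_add_of_le' hN
    rw [TS_add_two, add_assoc, ← R_eq_stirlingTerm_add_R hz (sq_mem_slitPlane hz hz2), ih]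
end

section
/- Euler's constant γ satisfies γ = 1/2 + ∫_0^∞ e^{−y} ( (1/2)·coth(y/2) − 1/y ) dy, where coth w = cosh w / sinh w. -/
open MeasureTheory

noncomputable def rCoth (y : ℝ) : ℝ := Real.cosh y / Real.sinh y

/-!
Since `½ coth (y/2) = ½ + 1/(eʸ - 1)`, the integrand is `e^{-y} (u'(y) - ½)` with
`u(y) = log ((eʸ - 1)/y)`. As `0 ≤ u(y) ≤ y`, the boundary terms vanish when integrating by parts,
so `∫₀^∞ e^{-y} u' = ∫₀^∞ e^{-y} u`. Finally `u(y) = y + log (1 - e^{-y}) - log y`, and the three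
resulting integrals are `Γ(2) = 1`, `∫₀¹ log x dx = -1` (substituting `x = 1 - e^{-y}`) and
`Γ'(1) = -γ`.
-/

open Real Set Filter Topology

lemma half_mul_rCoth_half {y : ℝ} (hy : y ≠ 0) :
    1 / 2 * rCoth (y / 2) = 1 / 2 + 1 / (exp y - 1) := by
  have hsq : exp (y / 2) ^ 2 = exp y := by rw [← exp_nat_mul]; ring_nf
  have hne : exp y - 1 ≠ 0 := sub_ne_zero.2 (by simpa using hy)
  have hne' : exp (y / 2) ^ 2 - 1 ≠ 0 := by rwa [hsq]
  rw [rCoth, cosh_eq, sinh_eq, exp_neg, ← hsq]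
  field_simp
  ring

section LogSlopeExp

variable {y : ℝ}

lemma one_le_exp_sub_one_div (hy : 0 < y) : 1 ≤ (exp y - 1) / y := by
  rw [le_div_iff₀ hy]
  linarith [add_one_le_exp y]

lemma exp_mul_one_sub_le_one (y : ℝ) : exp y * (1 - y) ≤ 1 :=
  calc exp y * (1 - y) ≤ exp y * exp (-y) := by gcongr; exact one_sub_le_exp_neg y
    _ = 1 := by rw [← exp_add, add_neg_cancel, exp_zero]

lemma exp_sub_one_div_le_exp (hy : 0 < y) : (exp y - 1) / y ≤ exp y := by
  rw [div_le_iff₀ hy]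
  linarith [exp_mul_one_sub_le_one y]

lemma one_div_sub_one_div_exp_sub_one_mem_Icc (hy : 0 < y) :
    1 / y - 1 / (exp y - 1) ∈ Icc 0 1 := by
  have hy' : y ≤ exp y - 1 := by linarith [add_one_le_exp y]
  have hpos : 0 < exp y - 1 := hy.trans_le hy'
  constructor
  · exact sub_nonneg.2 (one_div_le_one_div_of_le hy hy')
  · rw [sub_le_comm, div_sub_one hy.ne', div_le_div_iff₀ hy hpos]
    linarith [exp_mul_one_sub_le_one y]

noncomputable def logSlopeExp (y : ℝ) : ℝ := log ((exp y - 1) / y)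

lemma logSlopeExp_nonneg (hy : 0 < y) : 0 ≤ logSlopeExp y :=
  log_nonneg (one_le_exp_sub_one_div hy)

lemma logSlopeExp_le_self (hy : 0 < y) : logSlopeExp y ≤ y := by
  calc logSlopeExp y ≤ log (exp y) :=
        log_le_log (zero_lt_one.trans_le (one_le_exp_sub_one_div hy)) (exp_sub_one_div_le_exp hy)
    _ = y := log_exp y

lemma logSlopeExp_eq (hy : 0 < y) : logSlopeExp y = y + log (1 - exp (-y)) - log y := by
  have hfac : exp y - 1 = exp y * (1 - exp (-y)) := by
    rw [mul_sub, mul_one, ← exp_add, add_neg_cancel, exp_zero]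
  have hpos : 0 < 1 - exp (-y) := sub_pos.2 (exp_lt_one_iff.2 (neg_lt_zero.2 hy))
  rw [logSlopeExp, hfac, log_div (by positivity) hy.ne', log_mul (exp_ne_zero y) hpos.ne', log_exp]

lemma hasDerivAt_logSlopeExp (hy : y ≠ 0) :
    HasDerivAt logSlopeExp (1 + 1 / (exp y - 1) - 1 / y) y := by
  have hne : exp y - 1 ≠ 0 := sub_ne_zero.2 (by simpa using hy)
  refine ((((hasDerivAt_exp y).sub_const 1).div (hasDerivAt_id y) hy).log
    (div_ne_zero hne hy)).congr_deriv ?_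
  simp only [id, Pi.div_apply]
  field_simp
  ring

lemma exp_neg_mul_logSlopeExp_mem_Icc (hy : 0 < y) :
    exp (-y) * logSlopeExp y ∈ Icc 0 (exp (-y) * y) :=
  ⟨mul_nonneg (exp_pos _).le (logSlopeExp_nonneg hy),
    mul_le_mul_of_nonneg_left (logSlopeExp_le_self hy) (exp_pos _).le⟩

end LogSlopeExp

lemma integrableOn_exp_neg_mul_self : IntegrableOn (fun y => exp (-y) * y) (Ioi 0) :=
  (GammaIntegral_convergent two_pos).congr_fun (fun y _ => by norm_num) measurableSet_Ioi

lemma integral_exp_neg_mul_self : ∫ y in Ioi 0, exp (-y) * y = 1 := by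
  rw [← Gamma_two, Gamma_eq_integral two_pos]
  exact setIntegral_congr_fun measurableSet_Ioi fun y _ => by norm_num

lemma integrableOn_exp_neg_mul_logSlopeExp :
    IntegrableOn (fun y => exp (-y) * logSlopeExp y) (Ioi 0) := by
  refine integrableOn_exp_neg_mul_self.mono' (by unfold logSlopeExp; fun_prop) ?_
  filter_upwards [ae_restrict_mem measurableSet_Ioi] with y hy
  have h := exp_neg_mul_logSlopeExp_mem_Icc hy
  rw [norm_of_nonneg h.1]
  exact h.2

lemma integrableOn_exp_neg_mul_deriv_logSlopeExp :
    IntegrableOn (fun y => exp (-y) * (1 + 1 / (exp y - 1) - 1 / y)) (Ioi 0) := by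
  refine (integrableOn_exp_neg_Ioi 0).mono' (by fun_prop) ?_
  filter_upwards [ae_restrict_mem measurableSet_Ioi] with y hy
  obtain ⟨h0, h1⟩ := one_div_sub_one_div_exp_sub_one_mem_Icc hy
  rw [norm_mul, norm_of_nonneg (exp_pos _).le, Real.norm_eq_abs, abs_of_nonneg (by linarith)]
  exact mul_le_of_le_one_right (exp_pos _).le (by linarith)

lemma tendsto_exp_neg_mul_logSlopeExp_nhdsGT_zero :
    Tendsto (fun y => exp (-y) * logSlopeExp y) (𝓝[>] 0) (𝓝 0) := by
  have h : Tendsto (fun y => exp (-y) * y) (𝓝[>] 0) (𝓝 0) := by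
    have hc : Continuous fun y => exp (-y) * y := by fun_prop
    exact (hc.tendsto' 0 0 (by simp)).mono_left nhdsWithin_le_nhds
  refine squeeze_zero' ?_ ?_ h <;> filter_upwards [self_mem_nhdsWithin] with y hy
  exacts [(exp_neg_mul_logSlopeExp_mem_Icc hy).1, (exp_neg_mul_logSlopeExp_mem_Icc hy).2]

lemma tendsto_exp_neg_mul_logSlopeExp_atTop :
    Tendsto (fun y => exp (-y) * logSlopeExp y) atTop (𝓝 0) := by
  have h : Tendsto (fun y => exp (-y) * y) atTop (𝓝 0) := by
    simpa [mul_comm] using tendsto_pow_mul_exp_neg_atTop_nhds_zero 1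
  refine squeeze_zero' ?_ ?_ h <;> filter_upwards [eventually_gt_atTop 0] with y hy
  exacts [(exp_neg_mul_logSlopeExp_mem_Icc hy).1, (exp_neg_mul_logSlopeExp_mem_Icc hy).2]

lemma integral_exp_neg_mul_deriv_logSlopeExp :
    ∫ y in Ioi 0, exp (-y) * (1 + 1 / (exp y - 1) - 1 / y) =
      ∫ y in Ioi 0, exp (-y) * logSlopeExp y := by
  have hv : ∀ y ∈ Ioi (0 : ℝ), HasDerivAt (fun y => exp (-y)) (-exp (-y)) y := fun y _ => by
    simpa using (hasDerivAt_neg y).exp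
  have h := integral_Ioi_mul_deriv_eq_deriv_mul (a' := 0) (b' := 0)
    (fun y hy => hasDerivAt_logSlopeExp hy.ne') hv
    (by simpa [Pi.mul_def, mul_comm] using integrableOn_exp_neg_mul_logSlopeExp.neg)
    (by simpa [Pi.mul_def, mul_comm] using integrableOn_exp_neg_mul_deriv_logSlopeExp)
    (by simpa [Pi.mul_def, mul_comm] using tendsto_exp_neg_mul_logSlopeExp_nhdsGT_zero)
    (by simpa [Pi.mul_def, mul_comm] using tendsto_exp_neg_mul_logSlopeExp_atTop)
  simp only [mul_neg, integral_neg, sub_zero, zero_sub, neg_inj] at h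
  simpa [mul_comm] using h.symm

section OneSubExpNeg

lemma hasDerivAt_one_sub_exp_neg (y : ℝ) : HasDerivAt (fun y => 1 - exp (-y)) (exp (-y)) y := by
  simpa using ((hasDerivAt_neg y).exp).const_sub 1

lemma strictMono_one_sub_exp_neg : StrictMono fun y : ℝ => 1 - exp (-y) :=
  fun _ _ h => sub_lt_sub_left (exp_lt_exp.2 (neg_lt_neg h)) 1

lemma image_one_sub_exp_neg_Ioi : (fun y => 1 - exp (-y)) '' Ioi 0 = Ioo 0 1 := by
  ext x
  constructor
  · rintro ⟨y, hy, rfl⟩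
    exact ⟨sub_pos.2 (exp_lt_one_iff.2 (neg_lt_zero.2 hy)), sub_lt_self 1 (exp_pos _)⟩
  · rintro ⟨hx0, hx1⟩
    refine ⟨-log (1 - x), neg_pos.2 (log_neg (by linarith) (by linarith)), ?_⟩
    simp [exp_log (sub_pos.2 hx1)]

variable {E : Type*} [NormedAddCommGroup E] [NormedSpace ℝ E]

lemma integrableOn_Ioo_zero_one_iff_comp_one_sub_exp_neg (g : ℝ → E) :
    IntegrableOn g (Ioo 0 1) ↔ IntegrableOn (fun y => exp (-y) • g (1 - exp (-y))) (Ioi 0) := by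
  rw [← image_one_sub_exp_neg_Ioi, integrableOn_image_iff_integrableOn_abs_deriv_smul
    measurableSet_Ioi (fun y _ => (hasDerivAt_one_sub_exp_neg y).hasDerivWithinAt)
    strictMono_one_sub_exp_neg.injective.injOn]
  simp only [abs_of_pos (exp_pos _)]

lemma integral_Ioo_zero_one_eq_integral_comp_one_sub_exp_neg (g : ℝ → E) :
    ∫ x in Ioo 0 1, g x = ∫ y in Ioi 0, exp (-y) • g (1 - exp (-y)) := by
  rw [← image_one_sub_exp_neg_Ioi, integral_image_eq_integral_abs_deriv_smul
    measurableSet_Ioi (fun y _ => (hasDerivAt_one_sub_exp_neg y).hasDerivWithinAt)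
    strictMono_one_sub_exp_neg.injective.injOn]
  simp only [abs_of_pos (exp_pos _)]

end OneSubExpNeg

lemma integral_log_Ioo_zero_one : ∫ x in Ioo 0 1, log x = -1 := by
  rw [← integral_Ioc_eq_integral_Ioo, ← intervalIntegral.integral_of_le zero_le_one, integral_log]
  simp

lemma integrableOn_exp_neg_mul_log_one_sub_exp_neg :
    IntegrableOn (fun y => exp (-y) * log (1 - exp (-y))) (Ioi 0) :=
  (integrableOn_Ioo_zero_one_iff_comp_one_sub_exp_neg log).1
    ((intervalIntegral.intervalIntegrable_log'.1).mono_set Ioo_subset_Ioc_self)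

lemma integral_exp_neg_mul_log_one_sub_exp_neg :
    ∫ y in Ioi 0, exp (-y) * log (1 - exp (-y)) = -1 := by
  rw [← integral_log_Ioo_zero_one, integral_Ioo_zero_one_eq_integral_comp_one_sub_exp_neg]
  rfl

lemma integral_exp_neg_mul_log : ∫ t in Ioi 0, exp (-t) * log t = -eulerMascheroniConstant := by
  have hGamma : Complex.Gamma =ᶠ[𝓝 1] Complex.GammaIntegral :=
    eventually_of_mem ((isOpen_lt continuous_const Complex.continuous_re).mem_nhds
      (by simp)) fun s hs => Complex.Gamma_eq_integral hs
  have hderiv := ((Complex.hasDerivAt_GammaIntegral (by simp)).congr_of_eventuallyEq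
    hGamma).unique Complex.hasDerivAt_Gamma_one
  have hreal : ∫ t : ℝ in Ioi 0, (t : ℂ) ^ ((1 : ℂ) - 1) * (log t * exp (-t)) =
      ((∫ t in Ioi 0, exp (-t) * log t : ℝ) : ℂ) := by
    rw [← integral_complex_ofReal]
    exact setIntegral_congr_fun measurableSet_Ioi fun t _ => by simp [mul_comm]
  exact_mod_cast hreal ▸ hderiv

lemma integral_exp_neg_mul_logSlopeExp :
    ∫ y in Ioi 0, exp (-y) * logSlopeExp y = eulerMascheroniConstant := by
  have hsplit : EqOn (fun y => exp (-y) * log y)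
      (fun y => exp (-y) * y + exp (-y) * log (1 - exp (-y)) - exp (-y) * logSlopeExp y)
      (Ioi 0) := fun y hy => by
    simp only [logSlopeExp_eq hy]; ring
  have hsum : IntegrableOn (fun y => exp (-y) * y + exp (-y) * log (1 - exp (-y))) (Ioi 0) :=
    integrableOn_exp_neg_mul_self.add integrableOn_exp_neg_mul_log_one_sub_exp_neg
  have h := setIntegral_congr_fun (μ := volume) measurableSet_Ioi hsplit
  rw [integral_exp_neg_mul_log, integral_sub hsum integrableOn_exp_neg_mul_logSlopeExp,
    integral_add integrableOn_exp_neg_mul_self integrableOn_exp_neg_mul_log_one_sub_exp_neg,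
    integral_exp_neg_mul_self, integral_exp_neg_mul_log_one_sub_exp_neg] at h
  linarith

/-- Integral representation of Euler's constant:
`γ = 1/2 + ∫₀^∞ e^{−y} ((1/2)·coth(y/2) − 1/y) dy`. -/
theorem eulerMascheroni_eq_half_add_integral :
    Real.eulerMascheroniConstant =
      1/2 + ∫ y in Set.Ioi (0:ℝ), Real.exp (-y) * ((1/2) * rCoth (y/2) - 1/y) := by
  have hintegrand : EqOn (fun y => exp (-y) * ((1 / 2) * rCoth (y / 2) - 1 / y))
      (fun y => exp (-y) * (1 + 1 / (exp y - 1) - 1 / y) - exp (-y) / 2) (Ioi 0) := fun y hy => by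
    simp only [half_mul_rCoth_half hy.ne']; ring
  rw [setIntegral_congr_fun measurableSet_Ioi hintegrand,
    integral_sub integrableOn_exp_neg_mul_deriv_logSlopeExp
      ((integrableOn_exp_neg_Ioi 0).div_const 2),
    integral_exp_neg_mul_deriv_logSlopeExp, integral_exp_neg_mul_logSlopeExp, integral_div,
    integral_exp_neg_Ioi_zero]
  ring
end

section
/- The reciprocal logarithm numbers satisfy the recurrence A_k = ∑_{j=0}^{k−1} (−1)^{k−j+1} A_j / (k − j + 1) for every integer k ≥ 1, where A_j are defined in the context. -/
/-!
Write `m_n(x) = x (x + 1) ⋯ (x + n - 1) / n!`, so that `A_k = (-1)^k ∫_{-1}^0 m_k`. These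
polynomials satisfy `m_n' = ∑_{j<n} m_j / (n - j)`: this is the coefficient of `z^n` in
`d/dx (1 - z)^(-x) = -log (1 - z) (1 - z)^(-x)`, since `∑ m_n(x) z^n = (1 - z)^(-x)`. For
`n ≥ 2`, `m_n` vanishes at `0` and `-1`, so integrating the identity over `[-1, 0]` with
`n = k + 1` yields the recurrence.
-/

open MeasureTheory

/-- The reciprocal logarithm numbers:
`A_k = ((−1)^k / k!) ∫₀¹ ∏_{j=0}^{k−1} (t − 1 + j) dt`, with `A_0 = 1`. -/
noncomputable def A (k : ℕ) : ℝ :=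
  ((-1)^k / (Nat.factorial k : ℝ)) *
    ∫ t in (0:ℝ)..1, ∏ j ∈ Finset.range k, (t - 1 + (j:ℝ))

open Polynomial Finset
open scoped Nat

namespace Polynomial

theorem ascPochhammer_eval_eq_prod_range {R : Type*} [CommSemiring R] (n : ℕ) (r : R) :
    (ascPochhammer R n).eval r = ∏ j ∈ range n, (r + j) := by
  induction n with
  | zero => simp
  | succ n ih => rw [ascPochhammer_succ_eval, ih, prod_range_succ]

theorem integral_eval_derivative (p : ℝ[X]) (a b : ℝ) :
    ∫ x in a..b, (derivative p).eval x = p.eval b - p.eval a :=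
  intervalIntegral.integral_eq_sub_of_hasDerivAt (fun x _ => p.hasDerivAt x)
    ((derivative p).continuous.intervalIntegrable a b)

variable (K : Type*) [Field K]

noncomputable def multichoose (n : ℕ) : K[X] := (n ! : K)⁻¹ • ascPochhammer K n

variable {K}

theorem multichoose_succ (n : ℕ) :
    multichoose K (n + 1) = ((n + 1 : K)⁻¹ • multichoose K n) * (X + (n : K[X])) := by
  simp only [multichoose, ascPochhammer_succ_right, Nat.factorial_succ, Nat.cast_mul,
    Nat.cast_succ, mul_inv, smul_smul, smul_mul_assoc]

theorem multichoose_eval_zero {n : ℕ} (hn : n ≠ 0) : (multichoose K n).eval 0 = 0 := by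
  simp [multichoose, hn]

theorem multichoose_eval_neg_one {n : ℕ} (hn : 1 < n) : (multichoose K n).eval (-1) = 0 := by
  simpa [multichoose] using Or.inr (ascPochhammer_eval_neg_coe_nat_of_lt (R := K) hn)

variable [CharZero K]

theorem multichoose_mul_X_add_natCast (j n : ℕ) :
    multichoose K j * (X + (n : K[X])) =
      (j + 1 : K) • multichoose K (j + 1) + ((n : K) - j) • multichoose K j := by
  have hj : (j + 1 : K) ≠ 0 := by exact_mod_cast j.succ_ne_zero
  rw [multichoose_succ, smul_mul_assoc, smul_smul, mul_inv_cancel₀ hj, one_smul, smul_eq_C_mul,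
    C_sub, map_natCast, map_natCast]
  ring

theorem derivative_multichoose (n : ℕ) :
    derivative (multichoose K n) = ∑ j ∈ range n, ((n : K) - j)⁻¹ • multichoose K j := by
  induction n with
  | zero => simp [multichoose]
  | succ n ih =>
    have hsub {i : ℕ} (hi : i < n + 1) : (n + 1 - i : K) ≠ 0 := by
      rw [sub_ne_zero]; exact_mod_cast hi.ne'
    have hstep : ∀ j ∈ range n, ((n : K) - j)⁻¹ • (multichoose K j * (X + (n : K[X]))) =
        ((j + 1 : K) / (n - j)) • multichoose K (j + 1) + multichoose K j := by
      intro j hj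
      have hj : (n : K) - j ≠ 0 := by
        rw [sub_ne_zero]; exact_mod_cast (mem_range.mp hj).ne'
      rw [multichoose_mul_X_add_natCast, smul_add, smul_smul, smul_smul, inv_mul_cancel₀ hj,
        one_smul, inv_mul_eq_div]
    have hsplit : ∀ j ∈ range (n + 1), ((n + 1 : K) - j)⁻¹ • multichoose K j =
        (n + 1 : K)⁻¹ • ((j / (n + 1 - j) + 1 : K) • multichoose K j) := by
      intro j hj
      rw [smul_smul]
      congr 1
      field_simp [hsub (mem_range.mp hj)]
      ring
    calc derivative (multichoose K (n + 1))
        = (n + 1 : K)⁻¹ • (derivative (multichoose K n) * (X + (n : K[X])) + multichoose K n) := by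
          rw [multichoose_succ, derivative_mul, derivative_smul, smul_mul_assoc, derivative_add,
            derivative_X, derivative_natCast, add_zero, mul_one, smul_add]
      _ = (n + 1 : K)⁻¹ • (∑ j ∈ range n, ((j + 1 : K) / (n - j)) • multichoose K (j + 1) +
            ∑ j ∈ range (n + 1), multichoose K j) := by
          rw [ih, sum_mul, sum_range_succ _ n, ← add_assoc]
          simp only [smul_mul_assoc]
          rw [sum_congr rfl hstep, sum_add_distrib]
      _ = ∑ j ∈ range (n + 1), (((n + 1 : ℕ) : K) - j)⁻¹ • multichoose K j := by
          push_cast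
          rw [sum_congr rfl hsplit, ← smul_sum]
          simp only [add_smul, one_smul, sum_add_distrib]
          rw [sum_range_succ' (fun j => ((j : K) / (n + 1 - j)) • multichoose K j)]
          push_cast
          simp [add_sub_add_right_eq_sub]

theorem sum_integral_multichoose_div_eq_zero {n : ℕ} (hn : 1 < n) :
    ∑ j ∈ range n, (∫ x in (-1 : ℝ)..0, (multichoose ℝ j).eval x) / (n - j) = 0 := by
  have hcont (j : ℕ) : Continuous fun x : ℝ => (multichoose ℝ j).eval x / (n - j) :=
    (multichoose ℝ j).continuous.div_const _
  have h := integral_eval_derivative (multichoose ℝ n) (-1) 0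
  rw [multichoose_eval_zero (by omega), multichoose_eval_neg_one hn, sub_zero,
    derivative_multichoose] at h
  simp only [eval_finsetSum, eval_smul, smul_eq_mul, inv_mul_eq_div] at h
  rw [intervalIntegral.integral_finsetSum fun j _ => (hcont j).intervalIntegrable _ _] at h
  simpa only [intervalIntegral.integral_div] using h

end Polynomial

theorem A_eq_neg_one_pow_mul_integral_multichoose (k : ℕ) :
    A k = (-1) ^ k * ∫ x in (-1 : ℝ)..0, (multichoose ℝ k).eval x := by
  have h := intervalIntegral.integral_comp_sub_right (a := 0) (b := 1)
    (fun x : ℝ => (ascPochhammer ℝ k).eval x) 1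
  simp only [ascPochhammer_eval_eq_prod_range, zero_sub, sub_self] at h
  simp only [A, h, multichoose, eval_smul, ascPochhammer_eval_eq_prod_range, smul_eq_mul,
    intervalIntegral.integral_const_mul]
  ring

/-- Recurrence relation for the reciprocal logarithm numbers:
`A_k = ∑_{j=0}^{k−1} (−1)^{k−j+1} A_j / (k − j + 1)` for every `k ≥ 1`. -/
theorem A_recurrence (k : ℕ) (hk : 1 ≤ k) :
    A k = ∑ j ∈ Finset.range k, (-1)^(k - j + 1) * A j / ((k - j + 1 : ℕ) : ℝ) := by
  have h := sum_integral_multichoose_div_eq_zero (n := k + 1) (by omega)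
  rw [sum_range_succ, Nat.cast_succ, add_sub_cancel_left, div_one] at h
  have hterm : ∀ j ∈ range k, (-1) ^ (k - j + 1) * A j / ((k - j + 1 : ℕ) : ℝ) =
      -(-1) ^ k * ((∫ x in (-1 : ℝ)..0, (multichoose ℝ j).eval x) / (k + 1 - j)) := by
    intro j hj
    have hjk : j ≤ k := (mem_range.mp hj).le
    have hsign : (-1 : ℝ) ^ (k - j + 1) * (-1) ^ j = -(-1) ^ k := by
      rw [pow_succ, mul_right_comm, ← pow_add, Nat.sub_add_cancel hjk, mul_neg_one]
    have hcast : ((k - j + 1 : ℕ) : ℝ) = k + 1 - j := by push_cast [Nat.cast_sub hjk]; ring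
    rw [A_eq_neg_one_pow_mul_integral_multichoose, hcast, ← mul_assoc, ← mul_div_assoc, hsign]
  rw [sum_congr rfl hterm, ← mul_sum, A_eq_neg_one_pow_mul_integral_multichoose]
  linear_combination (-1) ^ k * h
end

section
/- Let s ∈ ℂ with Re s > 1/2. Then ∫_0^∞ x^{s − 3/2} · log(1 − e^{−√x}) dx = −2·Γ(2s − 1)·ζ(2s), where x^{s−3/2} = exp((s − 3/2)·log x) for x > 0, log(1 − e^{−√x}) is the real logarithm of the number 1 − e^{−√x} ∈ (0,1), Γ is the Gamma function and ζ is the Riemann zeta function. (The Mellin-transform pair produced by equating the M = 0 and M = 1 Mellin–Barnes regularized forms of the Stirling series.) -/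
/-!
Expanding `log (1 - e^{-t}) = -∑_{n ≥ 1} e^{-nt} / n` and integrating termwise against `t^{a-1}`
gives the Mellin transform `-Γ(a) ζ(a + 1)` of `t ↦ log (1 - e^{-t})`. The substitution `x = t²`
turns the integral in question into twice this Mellin transform at `a = 2s - 1`.
-/

open MeasureTheory Complex Set

lemma hasSum_log_one_sub_exp_neg {t : ℝ} (ht : 0 < t) :
    HasSum (fun n : ℕ ↦ (-1 / (n + 1) : ℂ) * Real.exp (-(n + 1 : ℝ) * t))
      (Real.log (1 - Real.exp (-t)) : ℂ) := by
  have hx : |Real.exp (-t)| < 1 := by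
    rw [abs_of_pos (Real.exp_pos _)]
    exact Real.exp_lt_one_iff.mpr (neg_neg_of_pos ht)
  have hlog := (Real.hasSum_pow_div_log_of_abs_lt_one hx).neg
  rw [neg_neg] at hlog
  convert hasSum_ofReal.mpr hlog using 1
  ext n
  rw [← Real.exp_nat_mul]
  push_cast
  ring_nf

lemma summable_norm_neg_one_div_nat_add_one_div_rpow {σ : ℝ} (hσ : 0 < σ) :
    Summable fun n : ℕ ↦ ‖(-1 / (n + 1) : ℂ)‖ / ((n : ℝ) + 1) ^ σ := by
  refine ((Real.summable_one_div_nat_add_rpow 1 (σ + 1)).mpr (by linarith)).congr fun n ↦ ?_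
  have hn : (0 : ℝ) < n + 1 := by positivity
  have hnorm : ‖(n + 1 : ℂ)‖ = n + 1 := by exact_mod_cast Complex.norm_natCast (n + 1)
  rw [norm_div, norm_neg, norm_one, hnorm, abs_of_pos hn, Real.rpow_add_one hn.ne', div_div,
    mul_comm]

theorem mellin_log_one_sub_exp_neg {a : ℂ} (ha : 0 < a.re) :
    mellin (fun t ↦ (Real.log (1 - Real.exp (-t)) : ℂ)) a = -(Gamma a * riemannZeta (a + 1)) := by
  have hmellin := hasSum_mellin (fun n ↦ Or.inr (by positivity)) ha
    (fun t ht ↦ hasSum_log_one_sub_exp_neg ht) (summable_norm_neg_one_div_nat_add_one_div_rpow ha)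
  rw [← hmellin.tsum_eq, zeta_eq_tsum_one_div_nat_add_one_cpow (by simp [ha]), ← tsum_mul_left,
    ← tsum_neg]
  refine tsum_congr fun n ↦ ?_
  have hn : (n + 1 : ℂ) ≠ 0 := by exact_mod_cast n.succ_ne_zero
  push_cast
  rw [cpow_add _ _ hn, cpow_one]
  field_simp

/-- The Mellin-transform pair produced by equating the `M = 0` and `M = 1`
Mellin–Barnes regularized forms of the Stirling series: for `Re s > 1/2`,
`∫₀^∞ x^{s − 3/2}·log(1 − e^{−√x}) dx = −2·Γ(2s − 1)·ζ(2s)`. -/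
theorem integral_rpow_log_one_sub_exp_neg_sqrt (s : ℂ) (hs : 1/2 < s.re) :
    ∫ x in Set.Ioi (0:ℝ),
        (x:ℂ)^(s - 3/2) * (Real.log (1 - Real.exp (-Real.sqrt x)) : ℂ) =
      -2 * Complex.Gamma (2*s - 1) * riemannZeta (2*s) := by
  have hmellin : ∫ x in Ioi (0 : ℝ),
      (x : ℂ) ^ (s - 3/2) * (Real.log (1 - Real.exp (-Real.sqrt x)) : ℂ) =
        mellin (fun x ↦ (Real.log (1 - Real.exp (-x ^ (1/2 : ℝ))) : ℂ)) (s - 1/2) := by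
    simp only [mellin, smul_eq_mul, Real.sqrt_eq_rpow]
    ring_nf
  have hdouble : (s - 1/2) / ((1/2 : ℝ) : ℂ) = 2 * s - 1 := by push_cast; ring
  rw [hmellin, mellin_comp_rpow (fun t ↦ (Real.log (1 - Real.exp (-t)) : ℂ)), hdouble,
    mellin_log_one_sub_exp_neg (by simp; linarith), sub_add_cancel]
  norm_num
  ring
end

section
/- Let y > 0 and let c be a real number with c > 1/2. Then (1/(2π)) ∫_{−∞}^{∞} y^{−(c+it)} · ζ(2(c+it)) · Γ(2(c+it) − 1) dt = −(1/(2√y)) · log(1 − e^{−√y}), where y^{−(c+it)} = exp(−(c+it)·log y), ζ is the Riemann zeta function and Γ is the complex Gamma function. (The inverse Mellin–Barnes integral representation of the function −(1/(2√y))·log(1 − e^{−√y}).) -/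
/-!
Write `G(t) = -log(1 - e^{-t}) = ∑ₙ e^{-nt}/n` (`negLogOneSubExpNeg`). Integrating term by term
against `t^{s-1}` gives `𝓜G(s) = Γ(s) ζ(s + 1)` for `Re s > 0`, and the substitution `t = √x`
turns this into `𝓜F(s) = 𝓜G(2s - 1) = Γ(2s - 1) ζ(2s)` for `F(x) = x^{-1/2} G(√x) / 2`
(`sqrtRescale G`). On a vertical line `Re s = σ > 0` the recursion `Γ(s + 2) = s(s + 1)Γ(s)`
gives `|Γ(s)| ≤ Γ(σ + 2)/|s|²`, while `ζ(s + 1)` is bounded by `ζ(σ + 1)`, so `𝓜G` is integrable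
there. Mellin inversion then recovers `F(y)` as the stated integral.
-/

open MeasureTheory

section

open Complex Set

lemma integrable_inv_sq_add_sq {σ : ℝ} (hσ : σ ≠ 0) :
    Integrable fun t : ℝ ↦ (σ ^ 2 + t ^ 2)⁻¹ := by
  refine ((integrable_inv_one_add_sq.comp_div hσ).const_mul (σ ^ 2)⁻¹).congr
    (ae_of_all _ fun t ↦ ?_)
  field_simp

lemma norm_riemannZeta_le {s : ℂ} (hs : 1 < s.re) :
    ‖riemannZeta s‖ ≤ ∑' n, ‖LSeries.term 1 s.re n‖ := by
  rw [← LSeries_one_eq_riemannZeta hs, LSeries]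
  refine (norm_tsum_le_tsum_norm (LSeriesSummable_one_iff.mpr hs).norm).trans_eq
    (tsum_congr fun n ↦ ?_)
  simp [LSeries.norm_term_eq]

namespace Complex

lemma norm_Gamma_le_Gamma_re {s : ℂ} (hs : 0 < s.re) : ‖Gamma s‖ ≤ Real.Gamma s.re := by
  rw [Gamma_eq_integral hs, GammaIntegral, Real.Gamma_eq_integral hs]
  refine (norm_integral_le_integral_norm _).trans_eq (setIntegral_congr_fun measurableSet_Ioi
    fun x (hx : 0 < x) ↦ ?_)
  rw [norm_mul, norm_real, Real.norm_of_nonneg (Real.exp_pos _).le,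
    norm_cpow_eq_rpow_re_of_pos hx, sub_re, one_re]

lemma norm_Gamma_le_div_norm_sq {s : ℂ} (hs : 0 < s.re) :
    ‖Gamma s‖ ≤ Real.Gamma (s.re + 2) / ‖s‖ ^ 2 := by
  have hs0 : s ≠ 0 := fun h ↦ by simp [h] at hs
  have hs1 : s + 1 ≠ 0 := fun h ↦ by
    have := congrArg re h
    rw [add_re, one_re, zero_re] at this
    linarith
  have hrec : Gamma (s + 2) = (s + 1) * s * Gamma s := by
    rw [show s + 2 = s + 1 + 1 by ring, Gamma_add_one _ hs1, Gamma_add_one _ hs0, mul_assoc]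
  have hnorm : ‖s‖ ≤ ‖s + 1‖ := by
    rw [← sq_le_sq₀ (norm_nonneg _) (norm_nonneg _), ← normSq_eq_norm_sq, ← normSq_eq_norm_sq,
      normSq_apply, normSq_apply, add_re, add_im, one_re, one_im, add_zero]
    nlinarith
  rw [le_div_iff₀ (by positivity)]
  calc ‖Gamma s‖ * ‖s‖ ^ 2 ≤ ‖Gamma s‖ * (‖s + 1‖ * ‖s‖) := by
        rw [sq]; gcongr
    _ = ‖Gamma (s + 2)‖ := by rw [hrec, norm_mul, norm_mul]; ring
    _ ≤ Real.Gamma (s.re + 2) := by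
        simpa using norm_Gamma_le_Gamma_re (s := s + 2) (by simp only [add_re, re_ofNat]; linarith)

lemma verticalIntegrable_Gamma_mul {g : ℂ → ℂ} {σ C : ℝ} (hσ : 0 < σ)
    (hg : Continuous fun t : ℝ ↦ g (σ + t * I)) (hC : ∀ t : ℝ, ‖g (σ + t * I)‖ ≤ C) :
    VerticalIntegrable (fun s ↦ Gamma s * g s) σ := by
  have hre (t : ℝ) : ((σ : ℂ) + t * I).re = σ := by simp
  have hGamma : Continuous fun t : ℝ ↦ Gamma (σ + t * I) := by
    refine continuous_iff_continuousAt.mpr fun t ↦ ContinuousAt.comp (g := Gamma)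
      (continuousAt_Gamma _ fun m h ↦ ?_) (by fun_prop)
    have := hre t
    rw [h, neg_re, natCast_re] at this
    linarith [m.cast_nonneg (α := ℝ)]
  refine Integrable.mono' ((integrable_inv_sq_add_sq hσ.ne').const_mul
    (Real.Gamma (σ + 2) * C)) (hGamma.mul hg).aestronglyMeasurable (ae_of_all _ fun t ↦ ?_)
  have hΓ := norm_Gamma_le_div_norm_sq (s := σ + t * I) (by rw [hre]; exact hσ)
  rw [hre, ← normSq_eq_norm_sq, normSq_add_mul_I] at hΓ
  calc ‖Gamma (σ + t * I) * g (σ + t * I)‖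
      ≤ Real.Gamma (σ + 2) / (σ ^ 2 + t ^ 2) * C := by
        rw [norm_mul]
        exact mul_le_mul hΓ (hC t) (norm_nonneg _) (hΓ.trans' (norm_nonneg _))
    _ = Real.Gamma (σ + 2) * C * (σ ^ 2 + t ^ 2)⁻¹ := by ring

end Complex

variable {E : Type*} [NormedAddCommGroup E]

lemma Complex.VerticalIntegrable.comp_two_mul_sub_one {g : ℂ → E} {σ : ℝ}
    (hg : VerticalIntegrable g (2 * σ - 1)) : VerticalIntegrable (fun s ↦ g (2 * s - 1)) σ := by
  refine (hg.comp_mul_left' two_ne_zero).congr (ae_of_all _ fun t ↦ ?_)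
  dsimp only
  congr 1
  push_cast
  ring

variable [NormedSpace ℂ E]

noncomputable def sqrtRescale (f : ℝ → E) (x : ℝ) : E :=
  (x : ℂ) ^ (-(2⁻¹ : ℂ)) • (2⁻¹ : ℂ) • f (x ^ (2⁻¹ : ℝ))

lemma mellin_sqrtRescale (f : ℝ → E) (s : ℂ) :
    mellin (sqrtRescale f) s = mellin f (2 * s - 1) := by
  unfold sqrtRescale
  rw [mellin_cpow_smul, mellin_const_smul, mellin_comp_rpow,
    abs_of_pos (by norm_num : (0 : ℝ) < 2⁻¹), inv_inv, ← coe_smul, smul_smul]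
  norm_num
  congr 1
  ring

lemma MellinConvergent.sqrtRescale {f : ℝ → E} {s : ℂ} (hf : MellinConvergent f (2 * s - 1)) :
    MellinConvergent (sqrtRescale f) s := by
  refine MellinConvergent.cpow_smul.mpr (MellinConvergent.const_smul ?_ _)
  refine (MellinConvergent.comp_rpow (by norm_num)).mpr ?_
  convert hf using 1
  push_cast
  ring

lemma continuousAt_sqrtRescale {f : ℝ → E} {x : ℝ} (hx : 0 < x)
    (hf : ContinuousAt f (x ^ (2⁻¹ : ℝ))) : ContinuousAt (sqrtRescale f) x :=
  (continuousAt_ofReal_cpow_const _ _ (Or.inr hx.ne')).smul (continuousAt_const.smul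
    (hf.comp (f := fun x : ℝ ↦ x ^ (2⁻¹ : ℝ)) (Real.continuousAt_rpow_const _ _ (Or.inl hx.ne'))))

noncomputable def negLogOneSubExpNeg (t : ℝ) : ℂ := (-Real.log (1 - Real.exp (-t)) : ℝ)

lemma continuousAt_negLogOneSubExpNeg {t : ℝ} (ht : 0 < t) :
    ContinuousAt negLogOneSubExpNeg t := by
  have : 1 - Real.exp (-t) ≠ 0 := (sub_pos.mpr (Real.exp_lt_one_iff.mpr (neg_neg_of_pos ht))).ne'
  unfold negLogOneSubExpNeg
  fun_prop (disch := exact this)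

lemma hasSum_negLogOneSubExpNeg {t : ℝ} (ht : 0 < t) :
    HasSum (fun n : ℕ ↦ 1 / ((n : ℂ) + 1) * Real.exp (-((n : ℝ) + 1) * t))
      (negLogOneSubExpNeg t) := by
  have hx : |Real.exp (-t)| < 1 := by
    rw [abs_of_pos (Real.exp_pos _)]
    exact Real.exp_lt_one_iff.mpr (neg_neg_of_pos ht)
  refine (hasSum_ofReal.mpr (Real.hasSum_pow_div_log_of_abs_lt_one hx)).congr_fun fun n ↦ ?_
  rw [← Real.exp_nat_mul]
  push_cast
  ring_nf

lemma mellin_negLogOneSubExpNeg {s : ℂ} (hs : 0 < s.re) :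
    mellin negLogOneSubExpNeg s = Gamma s * riemannZeta (s + 1) := by
  have hsum : Summable fun n : ℕ ↦ ‖1 / ((n : ℂ) + 1)‖ / ((n : ℝ) + 1) ^ s.re := by
    refine ((Real.summable_one_div_nat_add_rpow 1 (s.re + 1)).mpr (by linarith)).congr
      fun n ↦ ?_
    have hn : (0 : ℝ) < n + 1 := by positivity
    rw [abs_of_pos hn, Real.rpow_add hn, Real.rpow_one, norm_div, norm_one,
      ← ofReal_natCast, ← ofReal_one, ← ofReal_add, norm_real, Real.norm_of_nonneg hn.le]
    field_simp
  rw [← (hasSum_mellin (fun _ ↦ Or.inr (by positivity)) hs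
    (fun t ht ↦ hasSum_negLogOneSubExpNeg ht) hsum).tsum_eq,
    zeta_eq_tsum_one_div_nat_add_one_cpow (by simpa using hs), ← tsum_mul_left]
  congr 1 with n
  have hn : (n : ℂ) + 1 ≠ 0 := by exact_mod_cast n.succ_ne_zero
  push_cast
  rw [cpow_add _ _ hn, cpow_one]
  field_simp

lemma mellinConvergent_negLogOneSubExpNeg {s : ℂ} (hs : 0 < s.re) :
    MellinConvergent negLogOneSubExpNeg s := by
  have hmeas : AEStronglyMeasurable negLogOneSubExpNeg (volume.restrict (Ioi 0)) := by
    unfold negLogOneSubExpNeg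
    exact (by fun_prop : Measurable _).aestronglyMeasurable
  -- A Bochner integral that is nonzero cannot be the junk value of a non-integrable function.
  have hreal : MellinConvergent negLogOneSubExpNeg s.re := by
    refine Integrable.of_integral_ne_zero ?_
    rw [← mellin, mellin_negLogOneSubExpNeg (by simpa using hs)]
    exact mul_ne_zero (Gamma_ne_zero_of_re_pos (by simpa using hs))
      (riemannZeta_ne_zero_of_one_lt_re (by simpa using hs))
  rw [MellinConvergent, mellin_convergent_iff_norm subset_rfl measurableSet_Ioi hmeas] at hreal ⊢
  simpa using hreal

lemma verticalIntegrable_mellin_negLogOneSubExpNeg {σ : ℝ} (hσ : 0 < σ) :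
    VerticalIntegrable (mellin negLogOneSubExpNeg) σ := by
  have hre (t : ℝ) : ((σ : ℂ) + t * I).re = σ := by simp
  have hζ : Continuous fun t : ℝ ↦ riemannZeta (σ + t * I + 1) := by
    refine continuous_iff_continuousAt.mpr fun t ↦ ContinuousAt.comp (g := riemannZeta)
      (differentiableAt_riemannZeta fun h ↦ ?_).continuousAt (by fun_prop)
    have := congrArg re h
    rw [add_re, hre, one_re] at this
    linarith
  refine (verticalIntegrable_Gamma_mul (g := fun s ↦ riemannZeta (s + 1))
    (C := ∑' n, ‖LSeries.term 1 (σ + 1 : ℝ) n‖) hσ hζ fun t ↦ ?_).congr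
    (ae_of_all _ fun t ↦ ?_)
  · simpa using norm_riemannZeta_le (s := σ + t * I + 1) (by simpa using hσ)
  · exact (mellin_negLogOneSubExpNeg (by rw [hre]; exact hσ)).symm

lemma sqrtRescale_negLogOneSubExpNeg {y : ℝ} (hy : 0 < y) :
    sqrtRescale negLogOneSubExpNeg y =
      ((-(1 / (2 * Real.sqrt y)) * Real.log (1 - Real.exp (-Real.sqrt y)) : ℝ) : ℂ) := by
  have hsqrt : y ^ (2⁻¹ : ℝ) = Real.sqrt y := by rw [Real.sqrt_eq_rpow]; norm_num
  have hpow : (y : ℂ) ^ (-(2⁻¹ : ℂ)) = ((Real.sqrt y)⁻¹ : ℝ) := by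
    rw [← hsqrt, ← Real.rpow_neg hy.le, ofReal_cpow hy.le]
    push_cast
    rfl
  rw [sqrtRescale, negLogOneSubExpNeg, hsqrt, hpow, smul_eq_mul, smul_eq_mul]
  push_cast
  ring

end

/-- The inverse Mellin–Barnes integral representation of
`−(1/(2√y))·log(1 − e^{−√y})`: for `y > 0` and any real `c > 1/2`,
`(1/(2π)) ∫_{−∞}^{∞} y^{−(c+it)}·ζ(2(c+it))·Γ(2(c+it) − 1) dt
  = −(1/(2√y))·log(1 − e^{−√y})`. -/
theorem inverse_mellinBarnes_log_one_sub_exp_neg_sqrt (y : ℝ) (hy : 0 < y)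
    (c : ℝ) (hc : 1/2 < c) :
    (1 / (2 * (Real.pi : ℂ))) *
        ∫ t : ℝ, (y:ℂ)^(-((c:ℂ) + (t:ℂ) * Complex.I)) *
          riemannZeta (2 * ((c:ℂ) + (t:ℂ) * Complex.I)) *
          Complex.Gamma (2 * ((c:ℂ) + (t:ℂ) * Complex.I) - 1) =
      ((-(1 / (2 * Real.sqrt y)) * Real.log (1 - Real.exp (-Real.sqrt y)) : ℝ) : ℂ) := by
  have hσ : 0 < 2 * c - 1 := by linarith
  have hmellin (s : ℂ) (hs : s.re = c) : mellin (sqrtRescale negLogOneSubExpNeg) s =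
      Complex.Gamma (2 * s - 1) * riemannZeta (2 * s) := by
    rw [mellin_sqrtRescale, mellin_negLogOneSubExpNeg (by simpa [hs] using hσ), sub_add_cancel]
  have hvert : Complex.VerticalIntegrable (mellin (sqrtRescale negLogOneSubExpNeg)) c := by
    rw [funext (mellin_sqrtRescale negLogOneSubExpNeg)]
    exact (verticalIntegrable_mellin_negLogOneSubExpNeg hσ).comp_two_mul_sub_one
  have hinv := mellinInv_mellin_eq c _ hy
    (mellinConvergent_negLogOneSubExpNeg (by simpa using hσ)).sqrtRescale hvert
    (continuousAt_sqrtRescale hy (continuousAt_negLogOneSubExpNeg (by positivity)))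
  rw [← sqrtRescale_negLogOneSubExpNeg hy, ← hinv, mellinInv, Complex.real_smul]
  push_cast
  congr 1
  refine integral_congr_ae (ae_of_all _ fun t ↦ ?_)
  dsimp only
  rw [smul_eq_mul, hmellin _ (by simp)]
  ring
end
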